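/- (Selmer-type formula) Let S be a submonoid of ℕ^d, let ≼ be a term order on ℕ^d, and let f ∈ H(S) satisfy h ≼ f for every h ∈ H(S) (so f is a Frobenius element of S realized by ≼). Then for every b ∈ S \ {0}: f + b ∈ Ap(S, b), and a ≼ f + b for every a ∈ Ap(S, b). That is, f + b is the ≼-maximum of Ap(S, b), so f = max_≼ Ap(S, b) − b. -/

import Mathlib

open scoped BigOperators

/-- The natural cast of an element of `ℕ^d` into `ℚ^d`. -/
def toQ {d : ℕ} (x : Fin d → ℕ) : Fin d → ℚ := fun i => (x i : ℚ)

/-- The natural cast of an element of `ℕ^d` into `ℤ^d`. -/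
def natToZ {d : ℕ} (x : Fin d → ℕ) : Fin d → ℤ := fun i => (x i : ℤ)

/-- The cone `pos(S)` of a submonoid `S ⊆ ℕ^d`: all nonnegative rational
combinations of elements of `S`, as a subset of `ℚ^d`. -/
def posCone {d : ℕ} (S : AddSubmonoid (Fin d → ℕ)) : Set (Fin d → ℚ) :=
  {q | ∃ (k : ℕ) (c : Fin k → ℚ) (s : Fin k → (Fin d → ℕ)),
    (∀ i, 0 ≤ c i) ∧ (∀ i, s i ∈ S) ∧ q = ∑ i, c i • toQ (s i)}

/-- The gap set `H(S) = (pos(S) \ S) ∩ ℕ^d`. -/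
def gaps {d : ℕ} (S : AddSubmonoid (Fin d → ℕ)) : Set (Fin d → ℕ) :=
  {x | toQ x ∈ posCone S ∧ x ∉ S}

/-- The set of pseudo-Frobenius elements of `S`. -/
def PF {d : ℕ} (S : AddSubmonoid (Fin d → ℕ)) : Set (Fin d → ℕ) :=
  {a | a ∈ gaps S ∧ ∀ s ∈ S, s ≠ 0 → a + s ∈ S}

/-- A term order on `ℕ^d`: a total order compatible with addition for which
`0` is the least element. -/
def IsTermOrder {d : ℕ} (r : (Fin d → ℕ) → (Fin d → ℕ) → Prop) : Prop :=
  (∀ a b, r a b ∨ r b a) ∧ (∀ a b, r a b → r b a → a = b) ∧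
    (∀ a b c, r a b → r b c → r a c) ∧ (∀ a, r 0 a) ∧
    (∀ a b c, r a b → r (a + c) (b + c))

/-- The set of Frobenius elements of `S`: maxima of `H(S)` for some term order. -/
def FrobSet {d : ℕ} (S : AddSubmonoid (Fin d → ℕ)) : Set (Fin d → ℕ) :=
  {f | f ∈ gaps S ∧ ∃ r, IsTermOrder r ∧ ∀ h ∈ gaps S, r h f}

/-- The Apéry set of `S` relative to `b`:
`Ap(S,b) = {a ∈ S : a - b ∈ pos(S) \ S}`, the difference taken in `ℚ^d`. -/
def Apery {d : ℕ} (S : AddSubmonoid (Fin d → ℕ)) (b : Fin d → ℕ) : Set (Fin d → ℕ) :=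
  {a | a ∈ S ∧ (toQ a - toQ b) ∈ posCone S ∧ ¬ ∃ s ∈ S, toQ s = toQ a - toQ b}

/-- The partial order `≼_S`: `x ≼_S y` iff `y - x ∈ S`. -/
def leS {d : ℕ} (S : AddSubmonoid (Fin d → ℕ)) (x y : Fin d → ℕ) : Prop :=
  ∃ s ∈ S, x + s = y

/-- `a` is a `≼_S`-maximal element of `X`. -/
def MaximalIn {d : ℕ} (S : AddSubmonoid (Fin d → ℕ)) (X : Set (Fin d → ℕ))
    (a : Fin d → ℕ) : Prop :=
  a ∈ X ∧ ∀ a' ∈ X, a' ≠ a → ¬ leS S a a'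

/-- `S` is irreducible: it is not the intersection of two submonoids of `ℕ^d`
each properly containing it. -/
def IrreducibleMonoid {d : ℕ} (S : AddSubmonoid (Fin d → ℕ)) : Prop :=
  ¬ ∃ S₁ S₂ : AddSubmonoid (Fin d → ℕ), S < S₁ ∧ S < S₂ ∧
    (S : Set (Fin d → ℕ)) = (S₁ : Set (Fin d → ℕ)) ∩ (S₂ : Set (Fin d → ℕ))

/-- The multiplicity of `S`: componentwise infimum of `S \ {0}`. -/
noncomputable def mult {d : ℕ} (S : AddSubmonoid (Fin d → ℕ)) : Fin d → ℕ :=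
  fun i => sInf {n | ∃ s ∈ S, s ≠ 0 ∧ s i = n}

/-- `S` is a PI-monoid: `S = (a + T) ∪ {0}` for some submonoid `T` of `ℕ^d`
and some `a ∈ T \ {0}`. -/
def IsPIMonoid {d : ℕ} (S : AddSubmonoid (Fin d → ℕ)) : Prop :=
  ∃ (T : AddSubmonoid (Fin d → ℕ)) (a : Fin d → ℕ), a ∈ T ∧ a ≠ 0 ∧
    (S : Set (Fin d → ℕ)) = {x | ∃ t ∈ T, x = a + t} ∪ {0}

/-- `G` is a minimal system of generators of `S`. -/
def IsMinimalGenSet {d : ℕ} (S : AddSubmonoid (Fin d → ℕ)) (G : Set (Fin d → ℕ)) : Prop :=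
  AddSubmonoid.closure G = S ∧ ∀ G' ⊂ G, AddSubmonoid.closure G' ≠ S

/-!
If `x ∈ Ap(S, b)` then `x - b` is a gap, so `x - b ≼ f` and hence `x ≼ f + b`. Conversely
`f + b` lies in the cone and strictly above `f` (as `b ≠ 0` and `0 ≼ b`), so by maximality of `f`
among the gaps it cannot be a gap: `f + b ∈ S`, and then `f + b ∈ Ap(S, b)` because `(f + b) - b = f`
is a gap.
-/

section toQ

variable {d : ℕ}

@[simp]
lemma toQ_apply (x : Fin d → ℕ) (i : Fin d) : toQ x i = x i := rfl

lemma toQ_injective : Function.Injective (toQ (d := d)) := fun _ _ h =>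
  funext fun i => by simpa using congrFun h i

lemma toQ_add (x y : Fin d → ℕ) : toQ (x + y) = toQ x + toQ y := by
  ext i; simp

lemma toQ_le_toQ {x y : Fin d → ℕ} : toQ x ≤ toQ y ↔ x ≤ y := by
  simp only [Pi.le_def, toQ_apply, Nat.cast_le]

lemma toQ_sub {x y : Fin d → ℕ} (h : y ≤ x) : toQ (x - y) = toQ x - toQ y := by
  ext i; simp [Nat.cast_sub (h i)]

end toQ

section posCone

variable {d : ℕ} {S : AddSubmonoid (Fin d → ℕ)}

lemma posCone_nonneg {q : Fin d → ℚ} (hq : q ∈ posCone S) : 0 ≤ q := by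
  obtain ⟨k, c, s, hc, -, rfl⟩ := hq
  exact Finset.sum_nonneg fun j _ => smul_nonneg (hc j) fun i => by simp

lemma toQ_mem_posCone {s : Fin d → ℕ} (hs : s ∈ S) : toQ s ∈ posCone S :=
  ⟨1, fun _ => 1, fun _ => s, fun _ => zero_le_one, fun _ => hs, by simp⟩

lemma posCone_add_mem {p q : Fin d → ℚ} (hp : p ∈ posCone S) (hq : q ∈ posCone S) :
    p + q ∈ posCone S := by
  obtain ⟨k, c, s, hc, hs, rfl⟩ := hp
  obtain ⟨l, c', s', hc', hs', rfl⟩ := hq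
  refine ⟨k + l, Fin.append c c', Fin.append s s', fun i => ?_, fun i => ?_, ?_⟩
  · cases i using Fin.addCases <;> simp [hc, hc']
  · cases i using Fin.addCases <;> simp [hs, hs']
  · rw [Fin.sum_univ_add]
    simp

end posCone

lemma mem_Apery_iff {d : ℕ} {S : AddSubmonoid (Fin d → ℕ)} {a b : Fin d → ℕ} :
    a ∈ Apery S b ↔ a ∈ S ∧ ∃ h ∈ gaps S, a = h + b := by
  constructor
  · rintro ⟨ha, hpos, hnot⟩
    have hba : b ≤ a := toQ_le_toQ.1 (sub_nonneg.1 (posCone_nonneg hpos))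
    refine ⟨ha, a - b, ⟨toQ_sub hba ▸ hpos, fun hS => hnot ⟨a - b, hS, toQ_sub hba⟩⟩, ?_⟩
    exact (tsub_add_cancel_of_le hba).symm
  · rintro ⟨ha, h, ⟨hpos, hnot⟩, rfl⟩
    have hsub : toQ (h + b) - toQ b = toQ h := by rw [toQ_add, add_sub_cancel_right]
    exact ⟨ha, hsub ▸ hpos, fun ⟨s, hs, hsh⟩ => hnot (toQ_injective (hsh.trans hsub) ▸ hs)⟩

section IsTermOrder

variable {d : ℕ} {r : (Fin d → ℕ) → (Fin d → ℕ) → Prop}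

lemma IsTermOrder.add_right (hr : IsTermOrder r) {a b : Fin d → ℕ} (hab : r a b)
    (c : Fin d → ℕ) : r (a + c) (b + c) :=
  hr.2.2.2.2 a b c hab

lemma IsTermOrder.le_add_right (hr : IsTermOrder r) (a c : Fin d → ℕ) : r a (a + c) := by
  simpa [add_comm] using hr.add_right (hr.2.2.2.1 c) a

lemma IsTermOrder.add_mem_of_forall_gaps_le (hr : IsTermOrder r) {S : AddSubmonoid (Fin d → ℕ)}
    {f : Fin d → ℕ} (hf : toQ f ∈ posCone S) (hfmax : ∀ h ∈ gaps S, r h f)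
    {b : Fin d → ℕ} (hb : b ∈ S) (hb0 : b ≠ 0) : f + b ∈ S := by
  by_contra hfb
  have hgap : f + b ∈ gaps S := ⟨toQ_add f b ▸ posCone_add_mem hf (toQ_mem_posCone hb), hfb⟩
  have heq : f + b = f := hr.2.1 _ _ (hfmax _ hgap) (hr.le_add_right f b)
  exact hb0 (by simpa using heq)

end IsTermOrder

/-- Selmer-type formula: If `f` is the maximum of `H(S)` for a
term order `≼`, then for every `b ∈ S \ {0}`, `f + b` is the `≼`-maximum of
the Apéry set `Ap(S, b)`. -/
theorem selmer_formula {d : ℕ} (S : AddSubmonoid (Fin d → ℕ))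
    (r : (Fin d → ℕ) → (Fin d → ℕ) → Prop) (hr : IsTermOrder r)
    (f : Fin d → ℕ) (hfH : f ∈ gaps S) (hfmax : ∀ h ∈ gaps S, r h f)
    (b : Fin d → ℕ) (hb : b ∈ S) (hb0 : b ≠ 0) :
    f + b ∈ Apery S b ∧ ∀ x ∈ Apery S b, r x (f + b) := by
  refine ⟨mem_Apery_iff.2 ⟨hr.add_mem_of_forall_gaps_le hfH.1 hfmax hb hb0, f, hfH, rfl⟩, ?_⟩
  intro x hx
  obtain ⟨-, h, hh, rfl⟩ := mem_Apery_iff.1 hx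
  exact hr.add_right (hfmax h hh) b
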